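/- arXiv:1503.02370 — 4 statements merged into one kernel-verified Lean document; each statement's English description precedes it below -/
import Mathlib

section
/- Fix an integer n ≥ 2. There exists a constant c > 0 (depending only on n) such that for every integer H ≥ 2, S_n(H) ≥ c · H^{n²}. -/
/-- `Farey H` is the set `F(H)` of nonnegative rationals of height at most `H`,
where the height of `α = s/r` (in lowest terms, `r ≥ 1`) is `max {|s|, r}`. -/
def Farey (H : ℕ) : Set ℚ := {α : ℚ | 0 ≤ α ∧ α.num.natAbs ≤ H ∧ α.den ≤ H}

/-- `stochCount n H = Sₙ(H)` is the number of `n × n` stochastic matrices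
(nonnegative entries, each row summing to `1`) with all entries in `F(H)`. -/
noncomputable def stochCount (n H : ℕ) : ℕ :=
  Nat.card {A : Matrix (Fin n) (Fin n) ℚ //
    (∀ i j, A i j ∈ Farey H) ∧ ∀ i, ∑ j, A i j = 1}

open Finset

def rowFinset (n M : ℕ) : Finset (Fin n → ℕ) :=
  (Fintype.piFinset fun _ => Finset.range (M+1)).filter
    (fun k => (∀ j, 1 ≤ k j) ∧ ∑ j, k j ≤ M)

lemma mem_rowFinset {n M : ℕ} {k : Fin n → ℕ} :
    k ∈ rowFinset n M ↔ (∀ j, 1 ≤ k j) ∧ ∑ j, k j ≤ M := by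
  constructor
  · exact fun h => (Finset.mem_filter.1 h).2
  · intro h
    refine Finset.mem_filter.2 ⟨?_, h⟩
    refine Fintype.mem_piFinset.2 fun j => Finset.mem_range.2 ?_
    have : k j ≤ ∑ j, k j := Finset.single_le_sum (fun i _ => Nat.zero_le _) (Finset.mem_univ j)
    omega

lemma card_rowFinset (n M : ℕ) : (rowFinset n M).card = M.choose n := by
  induction n generalizing M with
  | zero =>
    have h : rowFinset 0 M = {![]} := by
      ext k
      simp only [mem_rowFinset, Finset.mem_singleton]
      constructor
      · intro _; exact funext fun j => j.elim0
      · intro h; exact ⟨fun j => j.elim0, by simp⟩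
    rw [h]; simp
  | succ n ih =>
    rcases Nat.eq_zero_or_pos M with rfl | hM
    · have h : rowFinset (n+1) 0 = ∅ := by
        ext k
        simp only [mem_rowFinset, Finset.notMem_empty, iff_false, not_and]
        intro h1 h2
        have hle : k 0 ≤ ∑ j, k j :=
          Finset.single_le_sum (fun i _ => Nat.zero_le _) (Finset.mem_univ 0)
        have := h1 0; omega
      rw [h]; simp [Nat.choose_eq_zero_of_lt]
    · rw [Finset.card_eq_sum_card_fiberwise (f := fun k => k 0) (t := Finset.Icc 1 M)
        (fun k hk => by
          rcases mem_rowFinset.1 hk with ⟨h1, h2⟩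
          have hle : k 0 ≤ ∑ j, k j :=
            Finset.single_le_sum (fun i _ => Nat.zero_le _) (Finset.mem_univ 0)
          exact Finset.mem_Icc.2 ⟨h1 0, le_trans hle h2⟩)]
      have hfib : ∀ v ∈ Finset.Icc 1 M,
          ((rowFinset (n+1) M).filter fun k => k 0 = v).card = (M - v).choose n := by
        intro v hv
        rcases Finset.mem_Icc.1 hv with ⟨hv1, hv2⟩
        rw [← ih (M - v)]
        refine Finset.card_bij' (fun k _ => Fin.tail k) (fun k _ => Fin.cons v k) ?_ ?_ ?_ ?_
        · intro k hk
          rcases Finset.mem_filter.1 hk with ⟨hk, hk0⟩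
          rcases mem_rowFinset.1 hk with ⟨h1, h2⟩
          rw [Fin.sum_univ_succ] at h2
          refine mem_rowFinset.2 ⟨fun j => h1 j.succ, ?_⟩
          simp only [Fin.tail]
          omega
        · intro k hk
          rcases mem_rowFinset.1 hk with ⟨h1, h2⟩
          refine Finset.mem_filter.2 ⟨mem_rowFinset.2 ⟨?_, ?_⟩, by simp⟩
          · intro j
            refine Fin.cases ?_ ?_ j
            · simpa using hv1
            · intro i; simpa using h1 i
          · rw [Fin.sum_univ_succ]
            simp only [Fin.cons_zero, Fin.cons_succ]
            omega
        · intro k hk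
          rcases Finset.mem_filter.1 hk with ⟨_, hk0⟩
          show Fin.cons v (Fin.tail k) = k
          rw [← hk0]
          exact Fin.cons_self_tail k
        · intro k _
          funext j
          simp [Fin.tail]
      rw [Finset.sum_congr rfl hfib]
      rw [← Finset.Ico_add_one_right_eq_Icc, Finset.sum_Ico_eq_sum_range]
      have hre : ∀ i ∈ Finset.range (M + 1 - 1), (M - (1 + i)).choose n = (M - 1 - i).choose n := by
        intro i _; congr 1; omega
      rw [Finset.sum_congr rfl hre]
      have : M + 1 - 1 = M := by omega
      rw [this, Finset.sum_range_reflect (fun j => j.choose n) M]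
      have h0 : ∑ j ∈ Finset.range M, j.choose n = ∑ j ∈ Finset.Icc n (M-1), j.choose n := by
        symm
        apply Finset.sum_subset
        · intro x hx
          rcases Finset.mem_Icc.1 hx with ⟨hx1, hx2⟩
          exact Finset.mem_range.2 (by omega)
        · intro x hx hnx
          have hxM : x < M := Finset.mem_range.1 hx
          have hxn : x < n := by
            by_contra hc
            exact hnx (Finset.mem_Icc.2 ⟨by omega, by omega⟩)
          exact Nat.choose_eq_zero_of_lt hxn
      rw [h0, Nat.sum_Icc_choose]
      congr 1
      omega

def goodRowFinset (n M : ℕ) : Finset (Fin n → ℕ) :=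
  (rowFinset n M).filter (fun k => Finset.univ.gcd k = 1)

lemma card_dvd_filter (n M g : ℕ) (hg : 1 ≤ g) :
    ((rowFinset n M).filter (fun k => ∀ j, g ∣ k j)).card ≤ (M / g).choose n := by
  rw [← card_rowFinset n (M / g)]
  apply Finset.card_le_card_of_injOn (fun k => fun j => k j / g)
  · intro k hk
    rcases Finset.mem_filter.1 hk with ⟨hk, hdvd⟩
    rcases mem_rowFinset.1 hk with ⟨h1, h2⟩
    refine mem_rowFinset.2 ⟨?_, ?_⟩
    · intro j
      have hgk : g ≤ k j := Nat.le_of_dvd (h1 j) (hdvd j)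
      exact (Nat.one_le_div_iff (by omega)).2 hgk
    · have hmul : g * ∑ j, k j / g = ∑ j, k j := by
        rw [Finset.mul_sum]
        exact Finset.sum_congr rfl fun j _ => Nat.mul_div_cancel' (hdvd j)
      rw [Nat.le_div_iff_mul_le (by omega), mul_comm, hmul]
      exact h2
  · intro k hk k' hk' heq
    rcases Finset.mem_filter.1 hk with ⟨_, hdvd⟩
    rcases Finset.mem_filter.1 hk' with ⟨_, hdvd'⟩
    funext j
    have h1 : g * (k j / g) = k j := Nat.mul_div_cancel' (hdvd j)
    have h2 : g * (k' j / g) = k' j := Nat.mul_div_cancel' (hdvd' j)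
    have hthis : k j / g = k' j / g := congrFun heq j
    rw [← h1, ← h2, hthis]

lemma card_bad (n M : ℕ) (hn : 1 ≤ n) :
    ((rowFinset n M).filter (fun k => ¬ Finset.univ.gcd k = 1)).card
      ≤ ∑ g ∈ Finset.Icc 2 M, (M / g).choose n := by
  have hsub : (rowFinset n M).filter (fun k => ¬ Finset.univ.gcd k = 1)
      ⊆ (Finset.Icc 2 M).biUnion
        (fun g => (rowFinset n M).filter (fun k => ∀ j, g ∣ k j)) := by
    intro k hk
    rcases Finset.mem_filter.1 hk with ⟨hk', hne⟩
    rcases mem_rowFinset.1 hk' with ⟨h1, h2⟩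
    have hdvd : ∀ j, Finset.univ.gcd k ∣ k j := fun j => Finset.gcd_dvd (Finset.mem_univ j)
    have i0 : Fin n := ⟨0, by omega⟩
    have hgle : Finset.univ.gcd k ≤ k i0 := Nat.le_of_dvd (h1 i0) (hdvd i0)
    have hk0M : k i0 ≤ M :=
      le_trans (Finset.single_le_sum (fun i _ => Nat.zero_le _) (Finset.mem_univ i0)) h2
    have hg0 : Finset.univ.gcd k ≠ 0 := by
      intro h0
      have := Finset.gcd_eq_zero_iff.1 h0 i0 (Finset.mem_univ i0)
      have := h1 i0
      omega
    exact Finset.mem_biUnion.2 ⟨Finset.univ.gcd k, Finset.mem_Icc.2 ⟨by omega, by omega⟩,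
      Finset.mem_filter.2 ⟨hk', hdvd⟩⟩
  calc ((rowFinset n M).filter (fun k => ¬ Finset.univ.gcd k = 1)).card
      ≤ _ := Finset.card_le_card hsub
    _ ≤ ∑ g ∈ Finset.Icc 2 M, ((rowFinset n M).filter (fun k => ∀ j, g ∣ k j)).card :=
        Finset.card_biUnion_le
    _ ≤ ∑ g ∈ Finset.Icc 2 M, (M / g).choose n :=
        Finset.sum_le_sum fun g hg => card_dvd_filter n M g (by
          rcases Finset.mem_Icc.1 hg with ⟨h, _⟩; omega)

lemma card_good (n M : ℕ) (hn : 1 ≤ n) :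
    M.choose n ≤ (goodRowFinset n M).card + ∑ g ∈ Finset.Icc 2 M, (M / g).choose n := by
  have hsplit := Finset.card_filter_add_card_filter_not
    (s := rowFinset n M) (p := fun k => Finset.univ.gcd k = 1)
  have hbad := card_bad n M hn
  rw [← card_rowFinset n M]
  unfold goodRowFinset
  omega

lemma sum_inv_sq_le (G : ℕ) : ∑ g ∈ Finset.Icc 2 G, (1 : ℝ)/(g:ℝ)^2 ≤ 3/4 := by
  rcases lt_or_ge G 2 with h | h
  · rw [Finset.Icc_eq_empty_of_lt h, Finset.sum_empty]; norm_num
  · have key : ∀ G : ℕ, 2 ≤ G → ∑ g ∈ Finset.Icc 2 G, (1 : ℝ)/(g:ℝ)^2 ≤ 3/4 - 1/(G:ℝ) := by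
      intro G hG
      induction G, hG using Nat.le_induction with
      | base => norm_num
      | succ G hG ih =>
        rw [← Finset.Ico_add_one_right_eq_Icc, Finset.sum_Ico_succ_top (by omega), Finset.Ico_add_one_right_eq_Icc]
        have hG0 : (0:ℝ) < G := by positivity
        have hG1 : (0:ℝ) < (G:ℝ) + 1 := by positivity
        have hstep : (1:ℝ)/((G:ℝ)+1)^2 ≤ 1/(G:ℝ) - 1/((G:ℝ)+1) := by
          rw [div_sub_div _ _ (ne_of_gt hG0) (ne_of_gt hG1)]
          rw [div_le_div_iff₀ (by positivity) (by positivity)]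
          ring_nf
          nlinarith [hG0]
        push_cast
        linarith [ih]
    have := key G h
    have hG0 : (0:ℝ) < G := by positivity
    have : (0:ℝ) < 1/(G:ℝ) := by positivity
    linarith [key G h]

lemma good_card_lower (n M : ℕ) (hn : 2 ≤ n) (hM : 8 * n^2 ≤ M) :
    (M:ℝ)^n / (8 * n.factorial) ≤ ((goodRowFinset n M).card : ℝ) := by
  have hnM : n ≤ M := by nlinarith
  have hM1 : 1 ≤ M := by omega
  have hMR : (0:ℝ) < (M:ℝ) := by positivity
  have hfact : (0:ℝ) < (n.factorial : ℝ) := by positivity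
  -- lower bound on choose
  have hchoose : (7/8 : ℝ) * (M:ℝ)^n ≤ (n.factorial : ℝ) * (M.choose n : ℝ) := by
    have hdesc : ((M - n : ℕ))^n ≤ M.descFactorial n := by
      calc ((M - n : ℕ))^n ≤ (M + 1 - n)^n := Nat.pow_le_pow_left (by omega) n
        _ ≤ M.descFactorial n := Nat.pow_sub_le_descFactorial M n
    have hdesc' : M.descFactorial n = n.factorial * M.choose n :=
      Nat.descFactorial_eq_factorial_mul_choose M n
    have hcast : ((M - n : ℕ) : ℝ) = (M:ℝ) - (n:ℝ) := by
      push_cast [Nat.cast_sub hnM]; ring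
    have h2 : ((M:ℝ) - n)^n ≤ (n.factorial : ℝ) * (M.choose n : ℝ) := by
      calc ((M:ℝ) - n)^n = (((M - n : ℕ)) : ℝ)^n := by rw [hcast]
        _ ≤ ((M.descFactorial n : ℕ) : ℝ) := by exact_mod_cast hdesc
        _ = (n.factorial : ℝ) * (M.choose n : ℝ) := by rw [hdesc']; push_cast; ring
    have h3 : (7/8 : ℝ) * (M:ℝ)^n ≤ ((M:ℝ) - n)^n := by
      have ha : (-2 : ℝ) ≤ -((n:ℝ)/M) := by
        have : (n:ℝ)/M ≤ 1 := by
          rw [div_le_one hMR]; exact_mod_cast hnM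
        linarith
      have hb := one_add_mul_le_pow ha n
      have hfrac : (n:ℝ) * ((n:ℝ)/M) ≤ 1/8 := by
        rw [mul_div_assoc', div_le_div_iff₀ hMR (by norm_num)]
        have h8 : (8:ℝ) * (n:ℝ)^2 ≤ (M:ℝ) := by exact_mod_cast hM
        nlinarith
      have h78 : (7/8 : ℝ) ≤ (1 - (n:ℝ)/M)^n := by
        have : 1 + (n:ℝ) * (-((n:ℝ)/M)) = 1 - (n:ℝ)*((n:ℝ)/M) := by ring
        calc (7/8:ℝ) ≤ 1 - (n:ℝ)*((n:ℝ)/M) := by linarith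
          _ = 1 + (n:ℝ) * (-((n:ℝ)/M)) := by ring
          _ ≤ (1 + (-((n:ℝ)/M)))^n := hb
          _ = (1 - (n:ℝ)/M)^n := by ring_nf
      calc (7/8 : ℝ) * (M:ℝ)^n ≤ (1 - (n:ℝ)/M)^n * (M:ℝ)^n := by
            apply mul_le_mul_of_nonneg_right h78 (by positivity)
        _ = ((1 - (n:ℝ)/M) * (M:ℝ))^n := by rw [mul_pow]
        _ = ((M:ℝ) - n)^n := by rw [sub_mul, one_mul, div_mul_cancel₀]; exact ne_of_gt hMR
    linarith
  -- upper bound on the bad sum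
  have hbadsum : (n.factorial : ℝ) * ((∑ g ∈ Finset.Icc 2 M, (M / g).choose n : ℕ) : ℝ)
      ≤ (3/4 : ℝ) * (M:ℝ)^n := by
    push_cast
    rw [Finset.mul_sum]
    have hterm : ∀ g ∈ Finset.Icc 2 M,
        (n.factorial : ℝ) * ((M / g).choose n : ℝ) ≤ (M:ℝ)^n * (1/(g:ℝ)^2) := by
      intro g hg
      rcases Finset.mem_Icc.1 hg with ⟨hg2, hgM⟩
      have hgR : (0:ℝ) < (g:ℝ) := by positivity
      have h1 : (n.factorial : ℝ) * ((M / g).choose n : ℝ) = ((M/g).descFactorial n : ℝ) := by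
        rw [Nat.descFactorial_eq_factorial_mul_choose]; push_cast; ring
      have h2 : ((M/g).descFactorial n : ℝ) ≤ (((M/g : ℕ)) : ℝ)^n := by
        exact_mod_cast Nat.descFactorial_le_pow _ _
      have h3 : (((M/g : ℕ)) : ℝ) ≤ (M:ℝ)/(g:ℝ) := Nat.cast_div_le
      have h4 : (((M/g : ℕ)) : ℝ)^n ≤ ((M:ℝ)/(g:ℝ))^n := by
        apply pow_le_pow_left₀ (by positivity) h3
      have h5 : ((M:ℝ)/(g:ℝ))^n ≤ (M:ℝ)^n * (1/(g:ℝ)^2) := by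
        rw [div_pow]
        rw [div_le_iff₀ (by positivity)]
        have hgn : (g:ℝ)^2 ≤ (g:ℝ)^n := by
          apply pow_le_pow_right₀ (by exact_mod_cast Nat.one_le_iff_ne_zero.2 (by omega)) hn
        calc (M:ℝ)^n = (M:ℝ)^n * 1 := by ring
          _ ≤ (M:ℝ)^n * ((g:ℝ)^n / (g:ℝ)^2) := by
              apply mul_le_mul_of_nonneg_left _ (by positivity)
              rw [le_div_iff₀ (by positivity), one_mul]
              exact hgn
          _ = (M:ℝ)^n * (1/(g:ℝ)^2) * (g:ℝ)^n := by ring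
      linarith
    calc ∑ g ∈ Finset.Icc 2 M, (n.factorial : ℝ) * ((M / g).choose n : ℝ)
        ≤ ∑ g ∈ Finset.Icc 2 M, (M:ℝ)^n * (1/(g:ℝ)^2) := Finset.sum_le_sum hterm
      _ = (M:ℝ)^n * ∑ g ∈ Finset.Icc 2 M, (1:ℝ)/(g:ℝ)^2 := by rw [Finset.mul_sum]
      _ ≤ (M:ℝ)^n * (3/4) := by
          apply mul_le_mul_of_nonneg_left (sum_inv_sq_le M) (by positivity)
      _ = (3/4 : ℝ) * (M:ℝ)^n := by ring
  -- combine
  have hcg : (M.choose n : ℝ) ≤ ((goodRowFinset n M).card : ℝ)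
      + ((∑ g ∈ Finset.Icc 2 M, (M / g).choose n : ℕ) : ℝ) := by
    exact_mod_cast card_good n M (by omega)
  have hmain : (1/8 : ℝ) * (M:ℝ)^n ≤ (n.factorial : ℝ) * ((goodRowFinset n M).card : ℝ) := by
    nlinarith [hchoose, hbadsum, hcg, hfact]
  rw [div_le_iff₀ (by positivity)]
  calc (M:ℝ)^n = 8 * ((1/8 : ℝ) * (M:ℝ)^n) := by ring
    _ ≤ 8 * ((n.factorial : ℝ) * ((goodRowFinset n M).card : ℝ)) := by linarith
    _ = ((goodRowFinset n M).card : ℝ) * (8 * n.factorial) := by ring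

lemma div_mem_farey {k r H : ℕ} (hr : 1 ≤ r) (hk : k ≤ r) (hH : r ≤ H) :
    ((k:ℚ)/(r:ℚ)) ∈ Farey H := by
  have hr0 : ((r:ℚ)) ≠ 0 := by
    simp only [ne_eq, Nat.cast_eq_zero]; omega
  set q : ℚ := (k:ℚ)/(r:ℚ) with hq
  have hq0 : 0 ≤ q := by positivity
  have hcross : (q.num : ℚ) * (r:ℚ) = (k:ℚ) * (q.den : ℚ) := by
    have h1 : q * (r:ℚ) = (k:ℚ) := div_mul_cancel₀ _ hr0
    rw [← Rat.num_div_den q] at h1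
    field_simp at h1
    linarith [h1]
  have hcrossZ : q.num * (r:ℤ) = (k:ℤ) * (q.den:ℤ) := by exact_mod_cast hcross
  have hden : q.den ∣ r := by
    have := Rat.den_dvd (k:ℤ) (r:ℤ)
    rw [Rat.divInt_eq_div] at this
    have hcast1 : (((k:ℤ)):ℚ) = (k:ℚ) := by push_cast; ring
    have hcast2 : (((r:ℤ)):ℚ) = (r:ℚ) := by push_cast; ring
    rw [hcast1, hcast2] at this
    rw [hq]
    exact Int.natCast_dvd_natCast.mp this
  have hdenr : q.den ≤ r := Nat.le_of_dvd (by omega) hden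
  have hnum : q.num ≤ (k:ℤ) := by
    have h2 : q.num * (r:ℤ) ≤ (k:ℤ) * (r:ℤ) := by
      rw [hcrossZ]
      have : (q.den : ℤ) ≤ (r:ℤ) := by exact_mod_cast hdenr
      exact mul_le_mul_of_nonneg_left this (by positivity)
    exact le_of_mul_le_mul_right h2 (by exact_mod_cast hr)
  have hnum0 : 0 ≤ q.num := Rat.num_nonneg.2 hq0
  refine ⟨hq0, ?_, le_trans hdenr hH⟩
  have hkH : (k:ℤ) ≤ (H:ℤ) := by exact_mod_cast le_trans hk hH
  omega

lemma row_eq_of_div_eq {n : ℕ} (hn : 1 ≤ n) {k k' : Fin n → ℕ}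
    (h1 : ∀ j, 1 ≤ k j) (h1' : ∀ j, 1 ≤ k' j)
    (hg : Finset.univ.gcd k = 1) (hg' : Finset.univ.gcd k' = 1)
    (h : ∀ j, (k j : ℚ)/((∑ i, k i : ℕ):ℚ) = (k' j : ℚ)/((∑ i, k' i : ℕ):ℚ)) : k = k' := by
  have i0 : Fin n := ⟨0, by omega⟩
  have hr : 1 ≤ ∑ i, k i :=
    le_trans (h1 i0) (Finset.single_le_sum (fun i _ => Nat.zero_le _) (Finset.mem_univ i0))
  have hr' : 1 ≤ ∑ i, k' i :=
    le_trans (h1' i0) (Finset.single_le_sum (fun i _ => Nat.zero_le _) (Finset.mem_univ i0))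
  have hrQ : ((∑ i, k i : ℕ):ℚ) ≠ 0 := by
    simp only [ne_eq, Nat.cast_eq_zero]; omega
  have hrQ' : ((∑ i, k' i : ℕ):ℚ) ≠ 0 := by
    simp only [ne_eq, Nat.cast_eq_zero]; omega
  have hcross : ∀ j, k j * (∑ i, k' i) = k' j * (∑ i, k i) := by
    intro j
    have := (div_eq_div_iff hrQ hrQ').1 (h j)
    exact_mod_cast this
  have e1 : Finset.univ.gcd (fun j => k j * (∑ i, k' i)) = ∑ i, k' i := by
    rw [Finset.gcd_mul_right, hg]
    simp
  have e2 : Finset.univ.gcd (fun j => k' j * (∑ i, k i)) = ∑ i, k i := by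
    rw [Finset.gcd_mul_right, hg']
    simp
  have efun : (fun j => k j * (∑ i, k' i)) = (fun j => k' j * (∑ i, k i)) :=
    funext hcross
  have hsum : (∑ i, k' i) = (∑ i, k i) := by rw [← e1, ← e2, efun]
  funext j
  have := hcross j
  rw [hsum] at this
  exact Nat.eq_of_mul_eq_mul_right (by omega) this

lemma farey_finite (H : ℕ) : (Farey H).Finite := by
  have hsub : Farey H ⊆ (fun p : ℤ × ℕ => ((p.1 : ℚ))/((p.2:ℕ):ℚ)) ''
      (Set.Icc (-(H:ℤ)) (H:ℤ) ×ˢ Set.Icc 0 H) := by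
    rintro q ⟨hq0, hnum, hden⟩
    refine ⟨(q.num, q.den), ?_, ?_⟩
    · constructor
      · simp only [Set.mem_Icc]; omega
      · simp only [Set.mem_Icc]; omega
    · simp only
      exact_mod_cast Rat.num_div_den q
  exact Set.Finite.subset (Set.Finite.image _ (Set.Finite.prod (Set.finite_Icc _ _)
    (Set.finite_Icc _ _))) hsub

lemma stoch_finite (n H : ℕ) : Finite {A : Matrix (Fin n) (Fin n) ℚ //
    (∀ i j, A i j ∈ Farey H) ∧ ∀ i, ∑ j, A i j = 1} := by
  have : Finite (Farey H) := (farey_finite H).to_subtype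
  apply Finite.of_injective
    (f := fun A : {A : Matrix (Fin n) (Fin n) ℚ //
        (∀ i j, A i j ∈ Farey H) ∧ ∀ i, ∑ j, A i j = 1} =>
      (fun i j => (⟨A.1 i j, A.2.1 i j⟩ : Farey H) : Fin n → Fin n → Farey H))
  intro A A' hAA
  apply Subtype.ext
  ext i j
  have := congrFun (congrFun hAA i) j
  exact congrArg Subtype.val this

lemma goodRow_spec {n H : ℕ} {k : Fin n → ℕ} (hk : k ∈ goodRowFinset n H) :
    (∀ j, 1 ≤ k j) ∧ (∑ j, k j ≤ H) ∧ Finset.univ.gcd k = 1 := by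
  rcases Finset.mem_filter.1 hk with ⟨hk1, hk2⟩
  rcases mem_rowFinset.1 hk1 with ⟨h1, h2⟩
  exact ⟨h1, h2, hk2⟩

lemma pow_le_stochCount (n H : ℕ) (hn : 2 ≤ n) :
    (goodRowFinset n H).card ^ n ≤ stochCount n H := by
  classical
  have hfin := stoch_finite n H
  rw [stochCount]
  have hcard : Nat.card (Fin n → {k // k ∈ goodRowFinset n H})
      = (goodRowFinset n H).card ^ n := by
    rw [Nat.card_eq_fintype_card, Fintype.card_fun]
    simp [Fintype.card_coe]
  rw [← hcard]
  have hrow : ∀ (k : Fin n → ℕ), k ∈ goodRowFinset n H →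
      (∀ j, ((k j : ℚ)/((∑ i, k i : ℕ):ℚ)) ∈ Farey H) ∧
        (∑ j, (k j : ℚ)/((∑ i, k i : ℕ):ℚ)) = 1 := by
    intro k hk
    rcases goodRow_spec hk with ⟨h1, h2, _⟩
    have i0 : Fin n := ⟨0, by omega⟩
    have hr : 1 ≤ ∑ i, k i :=
      le_trans (h1 i0) (Finset.single_le_sum (fun i _ => Nat.zero_le _) (Finset.mem_univ i0))
    constructor
    · intro j
      exact div_mem_farey hr
        (Finset.single_le_sum (fun i _ => Nat.zero_le _) (Finset.mem_univ j)) h2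
    · rw [← Finset.sum_div]
      rw [show (∑ j, ((k j : ℕ):ℚ)) = ((∑ i, k i : ℕ):ℚ) by push_cast; rfl]
      apply div_self
      simp only [ne_eq, Nat.cast_eq_zero]
      omega
  apply Nat.card_le_card_of_injective
    (f := fun κ : Fin n → {k // k ∈ goodRowFinset n H} =>
      (⟨fun i j => (((κ i).1 j : ℕ):ℚ)/((∑ i', (κ i).1 i' : ℕ):ℚ),
        fun i j => (hrow _ (κ i).2).1 j,
        fun i => (hrow _ (κ i).2).2⟩ :
        {A : Matrix (Fin n) (Fin n) ℚ //
          (∀ i j, A i j ∈ Farey H) ∧ ∀ i, ∑ j, A i j = 1}))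
  intro κ κ' hκ
  funext i
  apply Subtype.ext
  have hmat := congrArg Subtype.val hκ
  have hrows : ∀ j, (((κ i).1 j : ℕ):ℚ)/((∑ i', (κ i).1 i' : ℕ):ℚ)
      = (((κ' i).1 j : ℕ):ℚ)/((∑ i', (κ' i).1 i' : ℕ):ℚ) := by
    intro j
    exact congrFun (congrFun hmat i) j
  exact row_eq_of_div_eq (by omega) (goodRow_spec (κ i).2).1 (goodRow_spec (κ' i).2).1
    (goodRow_spec (κ i).2).2.2 (goodRow_spec (κ' i).2).2.2 hrows

lemma one_le_stochCount (n H : ℕ) (hH : 1 ≤ H) : 1 ≤ stochCount n H := by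
  have hfin := stoch_finite n H
  have hne : Nonempty {A : Matrix (Fin n) (Fin n) ℚ //
      (∀ i j, A i j ∈ Farey H) ∧ ∀ i, ∑ j, A i j = 1} := by
    refine ⟨⟨(1 : Matrix (Fin n) (Fin n) ℚ), ?_, ?_⟩⟩
    · intro i j
      by_cases h : i = j
      · subst h
        simp only [Matrix.one_apply_eq]
        exact ⟨by norm_num, by norm_num [Rat.num_ofNat]; omega, by norm_num; omega⟩
      · rw [Matrix.one_apply_ne h]
        exact ⟨le_refl 0, by norm_num, by norm_num; omega⟩
    · intro i
      simp [Matrix.one_apply]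
  rw [stochCount]
  exact Nat.one_le_iff_ne_zero.2 (Nat.card_ne_zero.2 ⟨hne, hfin⟩)

/-- Fix `n ≥ 2`. There is `c > 0` such that for every integer
`H ≥ 2`, `Sₙ(H) ≥ c · H^(n²)`. -/
theorem stochastic_matrix_count_lower_bound (n : ℕ) (hn : 2 ≤ n) :
    ∃ c : ℝ, 0 < c ∧ ∀ H : ℕ, 2 ≤ H →
      c * (H : ℝ) ^ (n ^ 2) ≤ (stochCount n H : ℝ) := by
  have hfact : (0:ℝ) < (n.factorial : ℝ) := by positivity
  refine ⟨min (((8 * (n.factorial:ℝ))^n)⁻¹) (((8*(n:ℝ)^2)^(n^2))⁻¹), ?_, ?_⟩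
  · apply lt_min
    · positivity
    · positivity
  intro H hH
  have hHR : (0:ℝ) < (H:ℝ) := by positivity
  rcases le_or_gt (8 * n^2) H with h8 | h8
  · -- main case
    have hgood := good_card_lower n H hn h8
    have hcount := pow_le_stochCount n H hn
    have hcountR : (((goodRowFinset n H).card : ℝ))^n ≤ (stochCount n H : ℝ) := by
      exact_mod_cast hcount
    have hgpow : ((H:ℝ)^n / (8 * (n.factorial:ℝ)))^n
        ≤ (((goodRowFinset n H).card : ℝ))^n := by
      apply pow_le_pow_left₀ (by positivity) hgood
    have hexp : ((H:ℝ)^n / (8 * (n.factorial:ℝ)))^n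
        = (H:ℝ)^(n^2) * (((8 * (n.factorial:ℝ))^n)⁻¹) := by
      rw [div_pow, ← pow_mul, ← pow_two]
      ring
    calc min (((8 * (n.factorial:ℝ))^n)⁻¹) (((8*(n:ℝ)^2)^(n^2))⁻¹) * (H : ℝ) ^ (n ^ 2)
        ≤ (((8 * (n.factorial:ℝ))^n)⁻¹) * (H : ℝ) ^ (n ^ 2) := by
          apply mul_le_mul_of_nonneg_right (min_le_left _ _) (by positivity)
      _ = ((H:ℝ)^n / (8 * (n.factorial:ℝ)))^n := by rw [hexp]; ring
      _ ≤ (((goodRowFinset n H).card : ℝ))^n := hgpow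
      _ ≤ (stochCount n H : ℝ) := hcountR
  · -- small case
    have h1 : (1:ℝ) ≤ (stochCount n H : ℝ) := by
      exact_mod_cast one_le_stochCount n H (by omega)
    have hHle : (H:ℝ) ≤ 8*(n:ℝ)^2 := by exact_mod_cast le_of_lt h8
    have hpow : (H:ℝ)^(n^2) ≤ (8*(n:ℝ)^2)^(n^2) := by
      apply pow_le_pow_left₀ (by positivity) hHle
    have h2 : ((8*(n:ℝ)^2)^(n^2))⁻¹ * (H:ℝ)^(n^2) ≤ 1 := by
      rw [inv_mul_le_iff₀ (by positivity), mul_one]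
      exact hpow
    calc min (((8 * (n.factorial:ℝ))^n)⁻¹) (((8*(n:ℝ)^2)^(n^2))⁻¹) * (H : ℝ) ^ (n ^ 2)
        ≤ ((8*(n:ℝ)^2)^(n^2))⁻¹ * (H : ℝ) ^ (n ^ 2) := by
          apply mul_le_mul_of_nonneg_right (min_le_right _ _) (by positivity)
      _ ≤ 1 := h2
      _ ≤ (stochCount n H : ℝ) := h1
end

section
/- Fix an integer n ≥ 2. There exists a constant c > 0 (depending only on n) such that for every integer H ≥ 2, the number of tuples (r_1, s_1, …, r_n, s_n) of integers with H ≥ r_j > s_j ≥ 0 and gcd(r_j, s_j) = 1 for all j, satisfying ∑_{j=1}^n s_j/r_j = 1, is at least c · H^n. -/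
/-!
Write `n = k + 2`. For `b ∈ (M, 2M]`, `a ∈ (0, A]` coprime to `b` and `v ∈ [0, A)ᵏ`, the fractions
`a/b, (b - a - ∑ v)/b, v₁/b, …, v_k/b` in lowest terms form a solution, and the solution determines
`(a, b, v)` because `a/b` is already reduced. With `A ≍ H` and `M = 12(k+1)A`, a positive
proportion of the `A·M` pairs `(a, b)` is coprime, since `∑_{d ≥ 2} d⁻² < 1`; this gives
`≫ Aᵏ·A·M ≫ H^(k+2)` solutions.
-/

open Finset

lemma div_two_mul_le_cast_div (a d : ℕ) (h : d ≤ a) : (a : ℝ) / (2 * d) ≤ (a / d : ℕ) := by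
  rcases Nat.eq_zero_or_pos d with rfl | hd
  · simp
  have hq : 1 ≤ a / d := (Nat.one_le_div_iff hd).2 h
  have ha : a ≤ 2 * (a / d) * d := by
    have := Nat.lt_div_mul_add (a := a) hd
    nlinarith
  rw [div_le_iff₀ (by positivity)]
  have : (a : ℝ) ≤ 2 * (a / d : ℕ) * d := by exact_mod_cast ha
  linarith

lemma card_filter_dvd_Ioc_le (d M : ℕ) : #{x ∈ Ioc M (2 * M) | d ∣ x} ≤ M / d + 1 := by
  have hsub : {x ∈ Ioc 0 M | d ∣ x} ⊆ {x ∈ Ioc 0 (2 * M) | d ∣ x} :=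
    filter_subset_filter _ (Ioc_subset_Ioc_right (by omega))
  have heq : {x ∈ Ioc M (2 * M) | d ∣ x} =
      {x ∈ Ioc 0 (2 * M) | d ∣ x} \ {x ∈ Ioc 0 M | d ∣ x} := by
    ext x
    simp only [mem_sdiff, mem_filter, mem_Ioc]
    omega
  rw [heq, card_sdiff_of_subset hsub, Nat.Ioc_filter_dvd_card_eq_div,
    Nat.Ioc_filter_dvd_card_eq_div, two_mul]
  have := Nat.add_div_le_div_add_div_add_one M M d
  exact Nat.sub_le_iff_le_add'.2 (by omega)

lemma card_filter_not_coprime_le (A M : ℕ) :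
    #{p ∈ Ioc 0 A ×ˢ Ioc M (2 * M) | ¬ Nat.Coprime p.1 p.2} ≤
      ∑ d ∈ Icc 2 A, A / d * (M / d + 1) :=
  calc _ ≤ #((Icc 2 A).biUnion fun d =>
          {a ∈ Ioc 0 A | d ∣ a} ×ˢ {b ∈ Ioc M (2 * M) | d ∣ b}) := by
        refine card_le_card fun p hp => ?_
        simp only [mem_filter, mem_product, mem_Ioc, Nat.coprime_iff_gcd_eq_one] at hp
        obtain ⟨⟨⟨ha0, haA⟩, hb⟩, hp⟩ := hp
        have hpos := Nat.gcd_pos_of_pos_left p.2 ha0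
        have hle := Nat.le_of_dvd ha0 (Nat.gcd_dvd_left p.1 p.2)
        simp only [mem_biUnion, mem_product, mem_filter, mem_Icc, mem_Ioc]
        exact ⟨_, ⟨by omega, by omega⟩, ⟨⟨ha0, haA⟩, Nat.gcd_dvd_left _ _⟩,
          ⟨hb, Nat.gcd_dvd_right _ _⟩⟩
    _ ≤ ∑ d ∈ Icc 2 A, #({a ∈ Ioc 0 A | d ∣ a} ×ˢ {b ∈ Ioc M (2 * M) | d ∣ b}) :=
        card_biUnion_le
    _ ≤ _ := sum_le_sum fun d _ => by
        rw [card_product, Nat.Ioc_filter_dvd_card_eq_div]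
        exact Nat.mul_le_mul_left _ (card_filter_dvd_Ioc_le d M)

lemma sum_Icc_two_inv_sq_le (A : ℕ) : ∑ d ∈ Icc 2 A, ((d : ℝ) ^ 2)⁻¹ ≤ 11 / 12 :=
  calc _ ≤ ∑ d ∈ insert 2 (Ioo 2 (A + 1)), ((d : ℝ) ^ 2)⁻¹ :=
        sum_le_sum_of_subset_of_nonneg (fun d hd => by simp at hd ⊢; omega)
          (fun _ _ _ => by positivity)
    _ = 1 / 4 + ∑ d ∈ Ioo 2 (A + 1), ((d : ℝ) ^ 2)⁻¹ := by
        rw [sum_insert (by simp)]; norm_num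
    _ ≤ 1 / 4 + 2 / (2 + 1) := by
        gcongr; exact_mod_cast sum_Ioo_inv_sq_le (α := ℝ) 2 (A + 1)
    _ = 11 / 12 := by norm_num

lemma card_filter_coprime_ge (A M : ℕ) (h : 12 * A ≤ M) :
    (A * M : ℝ) / 24 ≤ #{p ∈ Ioc 0 A ×ˢ Ioc M (2 * M) | Nat.Coprime p.1 p.2} := by
  set P := Ioc 0 A ×ˢ Ioc M (2 * M)
  have htotal : #P = A * M := by
    rw [card_product, Nat.card_Ioc, Nat.card_Ioc, Nat.sub_zero, two_mul, Nat.add_sub_cancel]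
  have hsplit := card_filter_add_card_filter_not (s := P) (fun p => Nat.Coprime p.1 p.2)
  have hterm : ∀ d ∈ Icc 2 A,
      ((A / d * (M / d + 1) : ℕ) : ℝ) ≤ A * M * ((d : ℝ) ^ 2)⁻¹ + A / 2 := by
    intro d hd
    have hd : (2 : ℝ) ≤ d := by exact_mod_cast (mem_Icc.1 hd).1
    have hA : ((A / d : ℕ) : ℝ) ≤ A / d := Nat.cast_div_le
    have hM : ((M / d : ℕ) : ℝ) ≤ M / d := Nat.cast_div_le
    have hA2 : (A : ℝ) / d ≤ A / 2 := div_le_div_of_nonneg_left (by positivity) (by norm_num) hd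
    push_cast
    calc ((A / d : ℕ) : ℝ) * ((M / d : ℕ) + 1) ≤ A / d * (M / d + 1) := by gcongr
      _ = A * M * ((d : ℝ) ^ 2)⁻¹ + A / d := by field_simp
      _ ≤ _ := by gcongr
  have hbad : (#{p ∈ P | ¬ Nat.Coprime p.1 p.2} : ℝ) ≤ A * M * (11 / 12) + A * (A / 2) :=
    calc _ ≤ ((∑ d ∈ Icc 2 A, A / d * (M / d + 1) : ℕ) : ℝ) := by
          exact_mod_cast card_filter_not_coprime_le A M
      _ ≤ ∑ d ∈ Icc 2 A, (A * M * ((d : ℝ) ^ 2)⁻¹ + A / 2) := by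
          rw [Nat.cast_sum]; exact sum_le_sum hterm
      _ = A * M * ∑ d ∈ Icc 2 A, ((d : ℝ) ^ 2)⁻¹ + #(Icc 2 A) * (A / 2) := by
          rw [sum_add_distrib, mul_sum, sum_const, nsmul_eq_mul]
      _ ≤ A * M * (11 / 12) + A * (A / 2) := by
          gcongr
          · exact sum_Icc_two_inv_sq_le A
          · simp
  have hM : (12 * A : ℝ) ≤ M := by exact_mod_cast h
  have hcast :
      (#{p ∈ P | Nat.Coprime p.1 p.2} : ℝ) + #{p ∈ P | ¬ Nat.Coprime p.1 p.2} = A * M := by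
    exact_mod_cast hsplit.trans htotal
  nlinarith [(Nat.cast_nonneg A : (0 : ℝ) ≤ A)]

def fareySolutions (n H : ℕ) : Set ((Fin n → ℤ) × (Fin n → ℤ)) :=
  {rs | (∀ j, 0 ≤ rs.2 j ∧ rs.2 j < rs.1 j ∧ rs.1 j ≤ (H : ℤ) ∧ Int.gcd (rs.1 j) (rs.2 j) = 1) ∧
    ∑ j, (rs.2 j : ℚ) / (rs.1 j : ℚ) = 1}

lemma fareySolutions_finite (n H : ℕ) : (fareySolutions n H).Finite := by
  refine ((Set.finite_Icc (0 : Fin n → ℤ) fun _ => H).prod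
    (Set.finite_Icc (0 : Fin n → ℤ) fun _ => H)).subset ?_
  rintro rs ⟨h, -⟩
  simp only [Set.mem_prod, Set.mem_Icc, Pi.le_def, Pi.zero_apply]
  exact ⟨⟨fun j => by linarith [h j], fun j => (h j).2.2.1⟩,
    ⟨fun j => (h j).1, fun j => by linarith [h j]⟩⟩

def IsFareyPartition {n : ℕ} (H : ℕ) (q : Fin n → ℚ) : Prop :=
  (∀ j, 0 ≤ q j ∧ q j < 1 ∧ (q j).den ≤ H) ∧ ∑ j, q j = 1

lemma card_le_card_fareySolutions {n H : ℕ} {S : Finset (Fin n → ℚ)}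
    (hS : ∀ q ∈ S, IsFareyPartition H q) : #S ≤ Nat.card (fareySolutions n H) := by
  have := (fareySolutions_finite n H).to_subtype
  let f : S → fareySolutions n H := fun q =>
    ⟨(fun j => ((q.1 j).den : ℤ), fun j => (q.1 j).num), fun j => by
      obtain ⟨h0, h1, hH⟩ := (hS q q.2).1 j
      exact ⟨Rat.num_nonneg.2 h0, Rat.num_lt_denom_iff.2 h1, Int.ofNat_le.2 hH,
        (q.1 j).reduced.symm⟩, by simpa [Rat.num_div_den] using (hS q q.2).2⟩
  have hf : Function.Injective f := fun q q' h => by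
    have hden : ∀ j, ((q.1 j).den : ℤ) = (q'.1 j).den := congrFun (congrArg (·.1.1) h)
    have hnum : ∀ j, (q.1 j).num = (q'.1 j).num := congrFun (congrArg (·.1.2) h)
    exact Subtype.ext (funext fun j => Rat.ext (hnum j) (by exact_mod_cast hden j))
  simpa using Nat.card_le_card_of_injective f hf

lemma isFareyPartition_div {n b H : ℕ} {x : Fin n → ℤ} (hx : ∀ j, 0 ≤ x j ∧ x j < b)
    (hsum : ∑ j, x j = b) (hb0 : 0 < b) (hbH : b ≤ H) :
    IsFareyPartition H fun j => (x j : ℚ) / b := by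
  refine ⟨fun j => ?_, ?_⟩
  · obtain ⟨h0, h1⟩ := hx j
    refine ⟨by positivity, (div_lt_one (by positivity)).2 (by exact_mod_cast h1), ?_⟩
    have hden := Rat.den_dvd (x j) b
    rw [Rat.divInt_eq_div, Int.cast_natCast] at hden
    exact hbH.trans' (by exact_mod_cast Int.le_of_dvd (by omega) hden)
  · rw [← sum_div, ← Int.cast_sum, hsum, Int.cast_natCast, div_self (by positivity)]

section Construction

variable {k : ℕ}

def numerators (a b : ℕ) (v : Fin k → ℕ) : Fin (k + 2) → ℤ :=
  Matrix.vecCons (a : ℤ) (Matrix.vecCons ((b : ℤ) - a - ∑ i, (v i : ℤ)) fun i => (v i : ℤ))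

lemma sum_numerators (a b : ℕ) (v : Fin k → ℕ) : ∑ j, numerators a b v j = b := by
  simp only [numerators, Fin.sum_univ_succ, Matrix.cons_val_zero, Matrix.cons_val_succ]
  ring

lemma numerators_mem_Ico {a b : ℕ} {v : Fin k → ℕ} (ha : 0 < a) (hab : a + ∑ i, v i < b) :
    ∀ j, 0 ≤ numerators a b v j ∧ numerators a b v j < b := by
  have hab' : (a : ℤ) + ∑ i, (v i : ℤ) < b := by exact_mod_cast hab
  have hv : ∀ i, (v i : ℤ) ≤ ∑ i, (v i : ℤ) := fun i =>
    single_le_sum (fun i _ => Int.natCast_nonneg (v i)) (mem_univ i)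
  have hsum : (0 : ℤ) ≤ ∑ i, (v i : ℤ) := sum_nonneg fun i _ => Int.natCast_nonneg (v i)
  refine Fin.cases ?_ (Fin.cases ?_ fun i => ?_) <;>
    simp only [numerators, Matrix.cons_val_zero, Matrix.cons_val_succ]
  · omega
  · omega
  · have := hv i
    omega

def fareyTuple (a b : ℕ) (v : Fin k → ℕ) : Fin (k + 2) → ℚ :=
  fun j => (numerators a b v j : ℚ) / b

lemma fareyTuple_injOn :
    Set.InjOn (fun x : (ℕ × ℕ) × (Fin k → ℕ) => fareyTuple x.1.1 x.1.2 x.2)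
      {x | 0 < x.1.2 ∧ Nat.Coprime x.1.1 x.1.2} := by
  rintro ⟨⟨a, b⟩, v⟩ ⟨hb, hab⟩ ⟨⟨a', b'⟩, v'⟩ ⟨hb', hab'⟩ h
  simp only [fareyTuple, funext_iff] at h hb hab hb' hab'
  obtain ⟨ha, hb⟩ : (a : ℤ) = a' ∧ (b : ℤ) = b' := by
    refine Rat.div_int_inj (by omega) (by omega) hab hab' ?_
    simpa [numerators] using h 0
  rw [Nat.cast_inj] at ha hb
  subst ha hb
  have hb0 : (b : ℚ) ≠ 0 := by positivity
  have hv : v = v' := funext fun i => by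
    simpa [numerators, hb0] using h i.succ.succ
  simp [hv]

end Construction

lemma card_fareySolutions_ge (k A H : ℕ) (hAH : 24 * (k + 1) * A ≤ H) :
    (A : ℝ) ^ (k + 2) / 2 ≤ Nat.card (fareySolutions (k + 2) H) := by
  -- `M ≥ 12 A` for `card_filter_coprime_ge`, and `M ≥ (k + 1) A ≥ a + ∑ v`.
  set M := 12 * (k + 1) * A
  set C := {p ∈ Ioc 0 A ×ˢ Ioc M (2 * M) | Nat.Coprime p.1 p.2}
  set T := C ×ˢ Fintype.piFinset fun _ : Fin k => range A
  have hT : ∀ x ∈ T, 0 < x.1.1 ∧ x.1.1 + ∑ i, x.2 i < x.1.2 ∧ x.1.2 ≤ H ∧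
      Nat.Coprime x.1.1 x.1.2 := by
    rintro ⟨⟨a, b⟩, v⟩ hx
    dsimp only
    simp only [T, C, mem_product, mem_filter, mem_Ioc, Fintype.mem_piFinset, mem_range] at hx
    obtain ⟨⟨⟨⟨ha0, haA⟩, hMb, hbM⟩, hab⟩, hv⟩ := hx
    have hsum : ∑ i, v i ≤ k * A := by
      simpa using sum_le_card_nsmul univ v A fun i _ => (hv i).le
    have h2M : 2 * M ≤ H := le_of_eq_of_le (by ring) hAH
    refine ⟨ha0, ?_, hbM.trans h2M, hab⟩
    have : a + ∑ i, v i ≤ M := by simp only [M]; nlinarith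
    omega
  have hinj : Set.InjOn (fun x : (ℕ × ℕ) × (Fin k → ℕ) => fareyTuple x.1.1 x.1.2 x.2) T :=
    fareyTuple_injOn.mono fun x hx => by
      obtain ⟨ha, hab, -, hcop⟩ := hT x hx
      exact ⟨by omega, hcop⟩
  have hcard : #(T.image fun x => fareyTuple x.1.1 x.1.2 x.2) = #C * A ^ k := by
    rw [card_image_of_injOn hinj, card_product, Fintype.card_piFinset]
    simp
  have hle :
      #(T.image fun x => fareyTuple x.1.1 x.1.2 x.2) ≤ Nat.card (fareySolutions (k + 2) H) :=
    card_le_card_fareySolutions <| by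
      simp only [mem_image]
      rintro _ ⟨x, hx, rfl⟩
      obtain ⟨ha, hab, hbH, -⟩ := hT x hx
      exact isFareyPartition_div (numerators_mem_Ico ha hab) (sum_numerators _ _ _)
        (by omega) hbH
  have hC := card_filter_coprime_ge A M (by simp only [M]; nlinarith)
  have hM : (12 * A : ℝ) ≤ M := by simp only [M]; push_cast; nlinarith
  calc (A : ℝ) ^ (k + 2) / 2 = A * (12 * A) / 24 * A ^ k := by ring
    _ ≤ A * M / 24 * A ^ k := by gcongr
    _ ≤ #C * A ^ k := by gcongr
    _ ≤ _ := by exact_mod_cast hcard ▸ hle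

lemma one_le_card_fareySolutions (k : ℕ) {H : ℕ} (hH : 2 ≤ H) :
    1 ≤ Nat.card (fareySolutions (k + 2) H) := by
  simpa using card_le_card_fareySolutions (S := {fareyTuple 1 2 (0 : Fin k → ℕ)}) <| by
    simp only [mem_singleton, forall_eq]
    exact isFareyPartition_div (numerators_mem_Ico one_pos (by simp))
      (sum_numerators _ _ _) two_pos hH

/-- Fix `n ≥ 2`. There is `c > 0` such that for every integer
`H ≥ 2`, the number of integer tuples `(r₁, s₁, …, rₙ, sₙ)` with
`H ≥ rⱼ > sⱼ ≥ 0`, `gcd(rⱼ, sⱼ) = 1` for all `j`, and `∑ⱼ sⱼ/rⱼ = 1` (in `ℚ`),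
is at least `c · Hⁿ`. -/
theorem farey_solutions_lower_bound (n : ℕ) (hn : 2 ≤ n) :
    ∃ c : ℝ, 0 < c ∧ ∀ H : ℕ, 2 ≤ H →
      c * (H : ℝ) ^ n ≤
        (Nat.card {rs : (Fin n → ℤ) × (Fin n → ℤ) //
          (∀ j, 0 ≤ rs.2 j ∧ rs.2 j < rs.1 j ∧ rs.1 j ≤ (H : ℤ) ∧
            Int.gcd (rs.1 j) (rs.2 j) = 1) ∧
          ∑ j, (rs.2 j : ℚ) / (rs.1 j : ℚ) = 1} : ℝ) := by
  obtain ⟨k, rfl⟩ : ∃ k, n = k + 2 := ⟨n - 2, by omega⟩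
  refine ⟨((48 * (k + 1) : ℝ) ^ (k + 2))⁻¹ / 2, by positivity, fun H hH => ?_⟩
  change _ ≤ (Nat.card (fareySolutions (k + 2) H) : ℝ)
  rw [show ((48 * (k + 1) : ℝ) ^ (k + 2))⁻¹ / 2 * H ^ (k + 2) =
    ((H : ℝ) / (2 * (24 * (k + 1) : ℕ))) ^ (k + 2) / 2 by push_cast; rw [div_pow]; ring]
  set A := H / (24 * (k + 1))
  rcases Nat.eq_zero_or_pos A with hA | hA
  · have hHk : H < 24 * (k + 1) := by simpa [A, Nat.div_eq_zero_iff] using hA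
    have hsmall : (H : ℝ) / (2 * (24 * (k + 1) : ℕ)) ≤ 1 := by
      rw [div_le_one (by positivity)]
      exact_mod_cast (by omega : H ≤ 2 * (24 * (k + 1)))
    calc _ ≤ (1 : ℝ) / 2 := by gcongr; exact pow_le_one₀ (by positivity) hsmall
      _ ≤ 1 := by norm_num
      _ ≤ _ := by exact_mod_cast one_le_card_fareySolutions k hH
  · calc _ ≤ (A : ℝ) ^ (k + 2) / 2 := by
          gcongr
          exact div_two_mul_le_cast_div H _ ((Nat.div_pos_iff).1 hA).2
      _ ≤ _ := card_fareySolutions_ge k A H (Nat.mul_div_le H _)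
end

section
/- Let n ≥ 1 and suppose positive integers r_1, …, r_n and nonnegative integers s_1, …, s_n satisfy gcd(r_j, s_j) = 1 for every j and ∑_{j=1}^n s_j / r_j = 1 (as rational numbers). Then r_j² divides r_1 ⋯ r_n for every j, and consequently lcm(r_1², …, r_n²) divides r_1 ⋯ r_n. -/
/-- Let `n ≥ 1`, let `r₁, …, rₙ` be positive integers and
`s₁, …, sₙ` nonnegative integers with `gcd(rⱼ, sⱼ) = 1` for every `j` and
`∑ⱼ sⱼ/rⱼ = 1` (as rational numbers). Then `rⱼ² ∣ r₁ ⋯ rₙ` for every `j`, and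
consequently `lcm(r₁², …, rₙ²) ∣ r₁ ⋯ rₙ`. -/
theorem sq_dvd_prod_of_farey_solution (n : ℕ) (hn : 1 ≤ n) (r s : Fin n → ℕ)
    (hr : ∀ j, 0 < r j) (hgcd : ∀ j, Nat.gcd (r j) (s j) = 1)
    (hsum : ∑ j, (s j : ℚ) / (r j : ℚ) = 1) :
    (∀ j, r j ^ 2 ∣ ∏ i, r i) ∧
      Finset.univ.lcm (fun j => r j ^ 2) ∣ ∏ i, r i := by
  classical
  set P := ∏ i, r i with hP
  have hPr : ∀ j, r j * ∏ i ∈ Finset.univ.erase j, r i = P := by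
    intro j
    rw [hP, ← Finset.mul_prod_erase _ _ (Finset.mem_univ j)]
  have h0 : ∀ j, (r j : ℚ) ≠ 0 := fun j => Nat.cast_ne_zero.mpr (hr j).ne'
  have key : ∑ i, s i * ∏ k ∈ Finset.univ.erase i, r k = P := by
    have h := congrArg (· * (P : ℚ)) hsum
    simp only [Finset.sum_mul, one_mul] at h
    have heq : ∀ i ∈ Finset.univ, (s i : ℚ) / (r i : ℚ) * P =
        ((s i * ∏ k ∈ Finset.univ.erase i, r k : ℕ) : ℚ) := by
      intro i _
      rw [← hPr i]
      push_cast
      rw [← mul_assoc, div_mul_cancel₀ _ (h0 i)]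
    rw [Finset.sum_congr rfl heq, ← Nat.cast_sum] at h
    exact_mod_cast h
  have main : ∀ j, r j ^ 2 ∣ P := by
    intro j
    have h2 : r j ∣ ∑ i ∈ Finset.univ.erase j, s i * ∏ k ∈ Finset.univ.erase i, r k := by
      apply Finset.dvd_sum
      intro i hi
      have hij : j ≠ i := fun h => (Finset.mem_erase.mp hi).1 h.symm
      exact Dvd.dvd.mul_left
        (Finset.dvd_prod_of_mem _ (Finset.mem_erase.mpr ⟨hij, Finset.mem_univ _⟩)) _
    have hk := key
    rw [← Finset.add_sum_erase _ _ (Finset.mem_univ j)] at hk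
    have hdvdP : r j ∣ P := ⟨_, (hPr j).symm⟩
    have h1 : r j ∣ s j * ∏ k ∈ Finset.univ.erase j, r k := by
      have := Nat.dvd_sub (hk ▸ hdvdP) h2
      simpa using this
    have h3 : r j ∣ ∏ k ∈ Finset.univ.erase j, r k :=
      (Nat.Coprime.dvd_of_dvd_mul_left (hgcd j) h1)
    calc r j ^ 2 = r j * r j := sq (r j)
      _ ∣ r j * ∏ k ∈ Finset.univ.erase j, r k := mul_dvd_mul_left _ h3
      _ = P := hPr j
  exact ⟨main, Finset.lcm_dvd fun j _ => main j⟩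
end

section
/- Fix an integer n ≥ 2. There exists a constant c > 0 (depending only on n) such that for every integer H ≥ 2, 𝐒_n(H) ≥ c · H^{n² − 2n + 2}. -/
/-- `doublyStochCount n H = 𝐒ₙ(H)` is the number of `n × n` doubly stochastic
matrices (nonnegative entries, all rows and all columns summing to `1`) with all
entries in `F(H)`. -/
noncomputable def doublyStochCount (n H : ℕ) : ℕ :=
  Nat.card {A : Matrix (Fin n) (Fin n) ℚ //
    (∀ i j, A i j ∈ Farey H) ∧ (∀ i, ∑ j, A i j = 1) ∧ (∀ j, ∑ i, A i j = 1)}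

open Finset

lemma div_mem_farey_s13 {H q : ℕ} {u : ℤ} (hu : u ∈ Set.Icc 0 (q : ℤ)) (hq : 0 < q)
    (hqH : q ≤ H) : (u / q : ℚ) ∈ Farey H := by
  obtain ⟨hu₀, huq⟩ := hu
  have hq' : (q : ℤ) ≠ 0 := by positivity
  have hnum : (u / q : ℚ).num ∣ u := by simpa [Rat.divInt_eq_div] using Rat.num_dvd u hq'
  have hden : ((u / q : ℚ).den : ℤ) ∣ q := by simpa [Rat.divInt_eq_div] using Rat.den_dvd u q
  refine ⟨div_nonneg (mod_cast hu₀) (Nat.cast_nonneg q), ?_, ?_⟩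
  · obtain rfl | hu := eq_or_ne u 0
    · simp
    · have := Int.natAbs_le_of_dvd_ne_zero hnum hu
      omega
  · exact (Nat.le_of_dvd hq (Int.ofNat_dvd.mp hden)).trans hqH

def fareyDoublyStochastic (n H : ℕ) : Set (Matrix (Fin n) (Fin n) ℚ) :=
  {A | (∀ i j, A i j ∈ Farey H) ∧ (∀ i, ∑ j, A i j = 1) ∧ (∀ j, ∑ i, A i j = 1)}

lemma fareyDoublyStochastic_finite (n H : ℕ) : (fareyDoublyStochastic n H).Finite :=
  (Set.Finite.pi fun _ => Set.Finite.pi fun _ => farey_finite H).subset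
    fun A hA => by simpa [Set.mem_pi] using hA.1

lemma doublyStochCount_eq_ncard (n H : ℕ) :
    doublyStochCount n H = (fareyDoublyStochastic n H).ncard :=
  Nat.card_coe_set_eq _

lemma one_le_doublyStochCount (n : ℕ) {H : ℕ} (hH : 1 ≤ H) : 1 ≤ doublyStochCount n H := by
  rw [doublyStochCount_eq_ncard, Nat.one_le_iff_ne_zero]
  refine Set.ncard_ne_zero_of_mem (a := 1) ⟨fun i j => ?_, fun i => by simp [Matrix.one_apply],
    fun j => by simp [Matrix.one_apply]⟩ (fareyDoublyStochastic_finite n H)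
  simpa [Matrix.one_apply, apply_ite] using
    div_mem_farey_s13 (u := if i = j then 1 else 0) (by split_ifs <;> simp) zero_lt_one hH

lemma card_le_doublyStochCount {α : Type*} {n H : ℕ} {s : Finset α}
    {f : α → Matrix (Fin n) (Fin n) ℚ} (hf : ∀ x ∈ s, f x ∈ fareyDoublyStochastic n H)
    (hinj : Set.InjOn f s) : #s ≤ doublyStochCount n H := by
  rw [doublyStochCount_eq_ncard, ← Set.ncard_coe_finset]
  exact Set.ncard_le_ncard_of_injOn f hf hinj (fareyDoublyStochastic_finite n H)

lemma div_mem_fareyDoublyStochastic {n H q : ℕ} {N : Matrix (Fin n) (Fin n) ℤ}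
    (hN : ∀ i j, N i j ∈ Set.Icc 0 (q : ℤ)) (hrow : ∀ i, ∑ j, N i j = q)
    (hcol : ∀ j, ∑ i, N i j = q) (hq : 0 < q) (hqH : q ≤ H) :
    (fun i j => (N i j / q : ℚ)) ∈ fareyDoublyStochastic n H := by
  have hq' : (q : ℚ) ≠ 0 := by positivity
  refine ⟨fun i j => div_mem_farey_s13 (hN i j) hq hqH, fun i => ?_, fun j => ?_⟩
  · rw [← sum_div, ← Int.cast_sum, hrow, Int.cast_natCast, div_self hq']
  · rw [← sum_div, ← Int.cast_sum, hcol, Int.cast_natCast, div_self hq']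

section Border

variable {R : Type*} {k : ℕ}

def borderMatrix [AddCommGroup R] (q : R) (G : Matrix (Fin k) (Fin k) R) :
    Matrix (Fin (k + 1)) (Fin (k + 1)) R :=
  Matrix.of <| Fin.cons (Fin.cons (q - ∑ i, ∑ j, G i j) fun j => ∑ l, G j l)
    fun i => Fin.cons (∑ l, G l i)
      ((G + Matrix.diagonal fun i => q - ∑ l, G i l - ∑ l, G l i) i)

section
variable [AddCommGroup R] (q : R) (G : Matrix (Fin k) (Fin k) R)

@[simp] lemma borderMatrix_zero_zero : borderMatrix q G 0 0 = q - ∑ i, ∑ j, G i j := rfl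
@[simp] lemma borderMatrix_zero_succ (j : Fin k) : borderMatrix q G 0 j.succ = ∑ l, G j l := rfl
@[simp] lemma borderMatrix_succ_zero (i : Fin k) : borderMatrix q G i.succ 0 = ∑ l, G l i := rfl
@[simp] lemma borderMatrix_succ_succ (i j : Fin k) :
    borderMatrix q G i.succ j.succ =
      G i j + Matrix.diagonal (fun i => q - ∑ l, G i l - ∑ l, G l i) i j := rfl

lemma borderMatrix_row_sum (i : Fin (k + 1)) : ∑ j, borderMatrix q G i j = q := by
  cases i using Fin.cases with
  | zero => simp [Fin.sum_univ_succ]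
  | succ i =>
    simp only [Fin.sum_univ_succ, borderMatrix_succ_zero, borderMatrix_succ_succ, sum_add_distrib,
      Matrix.diagonal_apply, sum_ite_eq, mem_univ, if_true]
    abel

lemma borderMatrix_col_sum (j : Fin (k + 1)) : ∑ i, borderMatrix q G i j = q := by
  cases j using Fin.cases with
  | zero => simp [Fin.sum_univ_succ, Finset.sum_comm (f := fun i j => G i j)]
  | succ j => simp [Fin.sum_univ_succ, Finset.sum_add_distrib, Matrix.diagonal_apply]

lemma borderMatrix_injective : Function.Injective (borderMatrix (k := k) q) := by
  intro G G' h
  have hoff : ∀ i j, i ≠ j → G i j = G' i j := fun i j hij => by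
    simpa [Matrix.diagonal_apply_ne _ hij] using congrFun (congrFun h i.succ) j.succ
  ext i j
  obtain rfl | hij := eq_or_ne i j
  · have hcol := congrFun (congrFun h i.succ) 0
    simp only [borderMatrix_succ_zero, ← Finset.add_sum_erase _ _ (mem_univ i)] at hcol
    rwa [Finset.sum_congr rfl fun l hl => hoff l i (ne_of_mem_erase hl), add_left_inj] at hcol
  · exact hoff i j hij
end

section
variable [AddCommGroup R] [PartialOrder R] [IsOrderedAddMonoid R] {G : Matrix (Fin k) (Fin k) R}

lemma row_sum_add_col_sum_le (hG : ∀ i j, 0 ≤ G i j) (i : Fin k) :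
    ∑ l, G i l + ∑ l, G l i ≤ ∑ l, ∑ j, G l j + G i i := by
  have hcol : ∑ l ∈ univ.erase i, G l i ≤ ∑ l ∈ univ.erase i, ∑ j, G l j :=
    sum_le_sum fun l _ => single_le_sum (fun j _ => hG l j) (mem_univ i)
  calc ∑ l, G i l + ∑ l, G l i = ∑ l, G i l + (G i i + ∑ l ∈ univ.erase i, G l i) := by
        rw [add_sum_erase univ (fun l => G l i) (mem_univ i)]
    _ ≤ ∑ l, G i l + (G i i + ∑ l ∈ univ.erase i, ∑ j, G l j) := by gcongr
    _ = ∑ l, ∑ j, G l j + G i i := by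
        rw [← add_sum_erase univ (fun l => ∑ j, G l j) (mem_univ i)]; abel

lemma borderMatrix_mem_Icc {q : R} (hG : ∀ i j, 0 ≤ G i j) (hq : ∑ i, ∑ j, G i j ≤ q)
    (i j : Fin (k + 1)) : borderMatrix q G i j ∈ Set.Icc 0 q := by
  have hrow : ∀ i, ∑ l, G i l ≤ q := fun i =>
    (single_le_sum (fun l _ => sum_nonneg fun j _ => hG l j) (mem_univ i)).trans hq
  have hcol : ∀ i, ∑ l, G l i ≤ q := fun i =>
    (sum_le_sum fun l _ => single_le_sum (fun j _ => hG l j) (mem_univ i)).trans hq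
  have hrow₀ : ∀ i, 0 ≤ ∑ l, G i l := fun i => sum_nonneg fun l _ => hG i l
  have hcol₀ : ∀ i, 0 ≤ ∑ l, G l i := fun i => sum_nonneg fun l _ => hG l i
  cases i using Fin.cases with
  | zero =>
    cases j using Fin.cases with
    | zero =>
      simp only [borderMatrix_zero_zero, Set.mem_Icc, sub_nonneg, sub_le_self_iff]
      exact ⟨hq, sum_nonneg fun i _ => hrow₀ i⟩
    | succ j => exact ⟨hrow₀ j, hrow j⟩
  | succ i =>
    cases j using Fin.cases with
    | zero => exact ⟨hcol₀ i, hcol i⟩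
    | succ j =>
      simp only [borderMatrix_succ_succ, Matrix.diagonal_apply, Set.mem_Icc]
      split_ifs with hij
      · subst hij
        have hcross := row_sum_add_col_sum_le hG i
        have hii : G i i ≤ ∑ l, G i l := single_le_sum (fun l _ => hG i l) (mem_univ i)
        constructor
        · calc (0 : R) ≤ G i i + (∑ l, ∑ j, G l j - ∑ l, G i l - ∑ l, G l i) := by
                rw [← sub_nonneg] at hcross; convert hcross using 1; abel
            _ ≤ _ := by gcongr
        · calc G i i + (q - ∑ l, G i l - ∑ l, G l i) ≤ q - ∑ l, G l i := by
                rw [← sub_nonneg]; convert sub_nonneg.2 hii using 1; abel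
            _ ≤ q := sub_le_self q (hcol₀ i)
      · rw [add_zero]
        exact ⟨hG i j, (single_le_sum (fun l _ => hG i l) (mem_univ j)).trans (hrow i)⟩
end

end Border

lemma sum_range_succ_inv_sq_odd_le (N : ℕ) :
    ∑ i ∈ range (N + 1), (1 : ℝ) / (2 * i + 3) ^ 2 ≤ 17 / 72 - 1 / (4 * (N : ℝ) + 8) := by
  induction N with
  | zero => norm_num
  | succ N ih =>
    have hterm : (1 : ℝ) / (2 * (N + 1) + 3) ^ 2 ≤ 1 / (4 * N + 8) - 1 / (4 * (N + 1) + 8) := by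
      rw [div_sub_div _ _ (by positivity) (by positivity),
        div_le_div_iff₀ (by positivity) (by positivity)]
      nlinarith
    rw [sum_range_succ]
    push_cast
    linarith

lemma sum_range_inv_sq_odd_le (N : ℕ) :
    ∑ i ∈ range N, (1 : ℝ) / (2 * i + 3) ^ 2 ≤ (17 : ℝ) / 72 :=
  calc ∑ i ∈ range N, (1 : ℝ) / (2 * i + 3) ^ 2
      ≤ ∑ i ∈ range (N + 1), (1 : ℝ) / (2 * i + 3) ^ 2 :=
        sum_le_sum_of_subset_of_nonneg (range_subset_range.2 N.le_succ) fun _ _ _ => by positivity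
    _ ≤ 17 / 72 - 1 / (4 * (N : ℝ) + 8) := sum_range_succ_inv_sq_odd_le N
    _ ≤ 17 / 72 := sub_le_self _ (by positivity)

lemma card_filter_dvd_le {H : ℕ} {Q : Finset ℕ} (hQ : Q ⊆ Ioc 0 H) (d : ℕ) :
    (#{q ∈ Q | d ∣ q} : ℝ) ≤ H / d :=
  calc (#{q ∈ Q | d ∣ q} : ℝ) ≤ #{q ∈ Ioc 0 H | d ∣ q} :=
        mod_cast card_le_card (filter_subset_filter _ hQ)
    _ = (H / d : ℕ) := by rw [Nat.Ioc_filter_dvd_card_eq_div]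
    _ ≤ H / d := Nat.cast_div_le

lemma card_not_coprime_le {H M : ℕ} {Q A : Finset ℕ} (hQ : Q ⊆ Ioc 0 H) (hA : A ⊆ Ioc 0 M)
    (hodd : ∀ a ∈ A, Odd a) :
    (#{z ∈ Q ×ˢ A | ¬ z.1.Coprime z.2} : ℝ) ≤ 17 / 72 * H * M := by
  have hcover : {z ∈ Q ×ˢ A | ¬ z.1.Coprime z.2} ⊆
      (range H).biUnion fun i => {q ∈ Q | 2 * i + 3 ∣ q} ×ˢ {a ∈ A | 2 * i + 3 ∣ a} := by
    rintro ⟨q, a⟩ hz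
    simp only [mem_filter, mem_product] at hz
    obtain ⟨⟨hq, ha⟩, hnc⟩ := hz
    obtain ⟨p, hp, hpq, hpa⟩ := Nat.Prime.not_coprime_iff_dvd.1 hnc
    obtain ⟨j, rfl⟩ : Odd p := hp.odd_of_ne_two fun h2 =>
      Nat.not_even_iff_odd.2 (hodd a ha) (even_iff_two_dvd.2 (h2 ▸ hpa))
    have hpH := (Nat.le_of_dvd (mem_Ioc.1 (hQ hq)).1 hpq).trans (mem_Ioc.1 (hQ hq)).2
    have hj : 1 ≤ j := by
      by_contra h
      exact Nat.not_prime_one (by simpa [show j = 0 by omega] using hp)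
    have hp' : 2 * j + 1 = 2 * (j - 1) + 3 := by omega
    rw [hp'] at hpq hpa
    simp only [mem_biUnion, mem_range, mem_product, mem_filter]
    exact ⟨j - 1, by omega, ⟨hq, hpq⟩, ⟨ha, hpa⟩⟩
  calc (#{z ∈ Q ×ˢ A | ¬ z.1.Coprime z.2} : ℝ)
      ≤ ∑ i ∈ range H, (#{q ∈ Q | 2 * i + 3 ∣ q} * #{a ∈ A | 2 * i + 3 ∣ a} : ℕ) :=
        mod_cast (card_le_card hcover).trans (card_biUnion_le.trans_eq (by simp [card_product]))
    _ ≤ ∑ i ∈ range H, (H / (2 * i + 3) : ℝ) * (M / (2 * i + 3)) := by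
        push_cast
        gcongr with i
        · exact_mod_cast card_filter_dvd_le hQ (2 * i + 3)
        · exact_mod_cast card_filter_dvd_le hA (2 * i + 3)
    _ = H * M * ∑ i ∈ range H, (1 : ℝ) / (2 * i + 3) ^ 2 := by
        rw [mul_sum]; congr! 1 with i; field_simp
    _ ≤ H * M * (17 / 72) := by gcongr; exact sum_range_inv_sq_odd_le H
    _ = 17 / 72 * H * M := by ring

def coprimePairs (H : ℕ) : Finset (ℕ × ℕ) :=
  {z ∈ Ioc (H / 2) H ×ˢ (range (H / 8)).image (2 * · + 1) | z.1.Coprime z.2}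

lemma le_card_coprimePairs {H : ℕ} (hH : 288 ≤ H) :
    (H : ℝ) ^ 2 / 576 ≤ #(coprimePairs H) := by
  set Q := Ioc (H / 2) H
  set A := (range (H / 8)).image (2 * · + 1)
  have hA : A ⊆ Ioc 0 (H / 4) := by
    simp only [A, image_subset_iff, mem_range, mem_Ioc]
    omega
  have hodd : ∀ a ∈ A, Odd a := by
    simp only [A, mem_image]
    rintro a ⟨k, -, rfl⟩
    exact odd_two_mul_add_one k
  have hbad :=
    card_not_coprime_le (Ioc_subset_Ioc_left (Nat.zero_le (H / 2)) : Q ⊆ Ioc 0 H) hA hodd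
  have hsplit := card_filter_add_card_filter_not (s := Q ×ˢ A) (p := fun z => z.1.Coprime z.2)
  have hQ : (H : ℝ) / 2 ≤ #Q := by
    rw [Nat.card_Ioc, Nat.cast_sub (Nat.div_le_self H 2)]
    linarith [(Nat.cast_div_le : ((H / 2 : ℕ) : ℝ) ≤ H / 2)]
  have hAcard : (H : ℝ) / 8 - 1 ≤ #A := by
    rw [card_image_of_injective _ fun a b h => by simpa using h, card_range]
    have : H < H / 8 * 8 + 8 := by omega
    have : (H : ℝ) < (H / 8 : ℕ) * 8 + 8 := by exact_mod_cast this
    linarith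
  have hM : ((H / 4 : ℕ) : ℝ) ≤ H / 4 := Nat.cast_div_le
  have hHr : (288 : ℝ) ≤ H := by exact_mod_cast hH
  rw [card_product] at hsplit
  unfold coprimePairs
  have : (#Q : ℝ) * #A =
      #{z ∈ Q ×ˢ A | z.1.Coprime z.2} + #{z ∈ Q ×ˢ A | ¬ z.1.Coprime z.2} := by
    exact_mod_cast hsplit.symm
  -- `#Q * #A - 17/72 * H * (H/4) ≥ (H/2) (H/8 - 1) - 17/288 H² = H²/288 - H/2 ≥ H²/576`
  nlinarith

variable {k : ℕ}

-- The corner entry absorbs the slack, so that the entry sum is `q - a` and the corner of the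
-- bordered matrix is `a`.
def slackGrid (q a : ℕ) (g : Fin (k + 1) × Fin (k + 1) → ℕ) :
    Matrix (Fin (k + 1)) (Fin (k + 1)) ℤ :=
  Matrix.of fun i j => g (i, j) + if (i, j) = 0 then (q - a - ∑ p, g p : ℤ) else 0

def fareyEncoding (q a : ℕ) (g : Fin (k + 1) × Fin (k + 1) → ℕ) :
    Matrix (Fin (k + 2)) (Fin (k + 2)) ℚ :=
  fun i j => (borderMatrix (q : ℤ) (slackGrid q a g) i j / q : ℚ)

section
variable {q a : ℕ} {g : Fin (k + 1) × Fin (k + 1) → ℕ}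

lemma sum_slackGrid : ∑ i, ∑ j, slackGrid q a g i j = q - a := by
  simp only [slackGrid, Matrix.of_apply, ← Fintype.sum_prod_type', sum_add_distrib, sum_ite_eq',
    mem_univ, if_true]
  push_cast
  ring

lemma slackGrid_nonneg (h : a + ∑ p, g p ≤ q) (i j : Fin (k + 1)) :
    0 ≤ slackGrid q a g i j := by
  have : (a + ∑ p, g p : ℤ) ≤ q := by exact_mod_cast h
  simp only [slackGrid, Matrix.of_apply]
  split_ifs <;> omega

lemma slackGrid_apply_of_ne {i j : Fin (k + 1)} (h : (i, j) ≠ 0) :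
    slackGrid q a g i j = g (i, j) := by
  simp only [slackGrid, Matrix.of_apply, if_neg h, add_zero]

lemma fareyEncoding_mem {H : ℕ} (hq : 0 < q) (hqH : q ≤ H) (h : a + ∑ p, g p ≤ q) :
    fareyEncoding q a g ∈ fareyDoublyStochastic (k + 2) H :=
  div_mem_fareyDoublyStochastic
    (borderMatrix_mem_Icc (slackGrid_nonneg h) (by rw [sum_slackGrid]; omega))
    (borderMatrix_row_sum _ _) (borderMatrix_col_sum _ _) hq hqH

lemma fareyEncoding_zero_zero : fareyEncoding q a g 0 0 = a / q := by
  simp [fareyEncoding, sum_slackGrid]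

lemma fareyEncoding_inj {q' a' : ℕ} {g' : Fin (k + 1) × Fin (k + 1) → ℕ} (hq : 0 < q)
    (hq' : 0 < q') (ha : a.Coprime q) (ha' : a'.Coprime q') (hg : g 0 = 0) (hg' : g' 0 = 0)
    (h : fareyEncoding q a g = fareyEncoding q' a' g') : q = q' ∧ a = a' ∧ g = g' := by
  have hcorner := congrFun (congrFun h 0) 0
  simp only [fareyEncoding_zero_zero] at hcorner
  obtain ⟨rfl, rfl⟩ : a = a' ∧ q = q' := by
    have hcorner' : ((a : ℤ) : ℚ) / (q : ℤ) = ((a' : ℤ) : ℚ) / (q' : ℤ) := by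
      simpa only [Int.cast_natCast] using hcorner
    exact_mod_cast Rat.div_int_inj (mod_cast hq) (mod_cast hq') (by simpa using ha)
      (by simpa using ha') hcorner'
  refine ⟨rfl, rfl, ?_⟩
  have hN : borderMatrix (q : ℤ) (slackGrid q a g) =
      borderMatrix (q : ℤ) (slackGrid q a g') := by
    ext i j
    have := congrFun (congrFun h i) j
    simp only [fareyEncoding] at this
    exact_mod_cast (div_left_inj' (by positivity : (q : ℚ) ≠ 0)).1 this
  have hG := borderMatrix_injective _ hN
  funext ⟨i, j⟩
  by_cases hij : (i, j) = 0
  · rw [hij, hg, hg']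
  · have := congrFun (congrFun hG i) j
    rwa [slackGrid_apply_of_ne hij, slackGrid_apply_of_ne hij, Nat.cast_inj] at this

end

-- The corner coordinate is pinned to `0`: the corner of `slackGrid` is the slack, not a parameter.
def gridBox (k T : ℕ) : Finset (Fin (k + 1) × Fin (k + 1) → ℕ) :=
  Fintype.piFinset fun p => range (if p = 0 then 1 else T + 1)

section
variable {T : ℕ} {g : Fin (k + 1) × Fin (k + 1) → ℕ}

lemma card_gridBox (k T : ℕ) : #(gridBox k T) = (T + 1) ^ ((k + 1) ^ 2 - 1) := by
  simp only [gridBox, Fintype.card_piFinset, card_range]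
  rw [prod_ite, prod_const_one, one_mul, prod_const, filter_ne', card_erase_of_mem (mem_univ _),
    card_univ, Fintype.card_prod, Fintype.card_fin, sq]

lemma apply_zero_of_mem_gridBox (hg : g ∈ gridBox k T) : g 0 = 0 := by
  simpa using Fintype.mem_piFinset.1 hg 0

lemma sum_le_of_mem_gridBox (hg : g ∈ gridBox k T) : ∑ p, g p ≤ (k + 1) ^ 2 * T := by
  calc ∑ p, g p ≤ ∑ _p : Fin (k + 1) × Fin (k + 1), T := sum_le_sum fun p _ => by
        have := mem_range.1 (Fintype.mem_piFinset.1 hg p)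
        split_ifs at this <;> omega
    _ = (k + 1) ^ 2 * T := by simp [sq]
end

lemma card_coprimePairs_mul_card_gridBox_le (k H : ℕ) :
    #(coprimePairs H) * #(gridBox k (H / (8 * (k + 1) ^ 2))) ≤ doublyStochCount (k + 2) H := by
  set T := H / (8 * (k + 1) ^ 2)
  have hT : 8 * ((k + 1) ^ 2 * T) ≤ H := by
    rw [← mul_assoc]; exact Nat.mul_div_le H _
  rw [← card_product]
  refine card_le_doublyStochCount (f := fun t => fareyEncoding t.1.1 t.1.2 t.2) ?_ ?_
  · rintro ⟨⟨q, a⟩, g⟩ ht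
    simp only [coprimePairs, mem_product, mem_filter, mem_Ioc, mem_image, mem_range] at ht
    obtain ⟨⟨⟨⟨hq, hqH⟩, j, hj, rfl⟩, -⟩, hg⟩ := ht
    have := sum_le_of_mem_gridBox hg
    exact fareyEncoding_mem (q := q) (a := 2 * j + 1) (g := g) (by omega) hqH (by omega)
  · rintro ⟨⟨q, a⟩, g⟩ ht ⟨⟨q', a'⟩, g'⟩ ht' h
    simp only [coe_product, Set.mem_prod, mem_coe, coprimePairs, mem_filter, mem_product,
      mem_Ioc] at ht ht'
    obtain ⟨rfl, rfl, rfl⟩ := fareyEncoding_inj (by omega) (by omega) ht.1.2.symm ht'.1.2.symm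
      (apply_zero_of_mem_gridBox ht.2) (apply_zero_of_mem_gridBox ht'.2) h
    rfl

lemma mul_pow_le_doublyStochCount (k : ℕ) {H : ℕ} (hH : 288 ≤ H) :
    ((576 * (8 * (k + 1) ^ 2) ^ ((k + 1) ^ 2 - 1) : ℕ) : ℝ)⁻¹ * H ^ ((k + 1) ^ 2 + 1) ≤
      doublyStochCount (k + 2) H := by
  set K := (k + 1) ^ 2
  have hK : 0 < 8 * K := by positivity
  have hT : (H : ℝ) / (8 * K : ℕ) ≤ ((H / (8 * K) : ℕ) : ℝ) + 1 := by
    rw [div_le_iff₀ (by exact_mod_cast hK)]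
    exact_mod_cast (Nat.lt_mul_div_succ H hK).le.trans_eq (mul_comm _ _)
  calc ((576 * (8 * K) ^ (K - 1) : ℕ) : ℝ)⁻¹ * H ^ (K + 1)
      = (H : ℝ) ^ 2 / 576 * ((H : ℝ) / (8 * K : ℕ)) ^ (K - 1) := by
        rw [show K + 1 = 2 + (K - 1) by omega, pow_add, div_pow]
        push_cast
        ring
    _ ≤ #(coprimePairs H) * #(gridBox k (H / (8 * K))) := by
        rw [card_gridBox, Nat.cast_pow, Nat.cast_add_one]
        gcongr
        exact le_card_coprimePairs hH
    _ ≤ doublyStochCount (k + 2) H := mod_cast card_coprimePairs_mul_card_gridBox_le k H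

lemma exists_pos_mul_pow_le {f : ℕ → ℝ} {e H₀ : ℕ} {c₀ : ℝ} (hc₀ : 0 < c₀)
    (hlarge : ∀ H, H₀ ≤ H → c₀ * H ^ e ≤ f H) (hsmall : ∀ H, 1 ≤ H → 1 ≤ f H) :
    ∃ c, 0 < c ∧ ∀ H, 1 ≤ H → c * H ^ e ≤ f H := by
  refine ⟨min c₀ ((H₀ + 1 : ℝ) ^ e)⁻¹, by positivity, fun H hH => ?_⟩
  obtain hH₀ | hH₀ := le_or_gt H₀ H
  · exact (mul_le_mul_of_nonneg_right (min_le_left _ _) (by positivity)).trans (hlarge H hH₀)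
  · calc min c₀ ((H₀ + 1 : ℝ) ^ e)⁻¹ * H ^ e
          ≤ ((H₀ + 1 : ℝ) ^ e)⁻¹ * (H₀ + 1) ^ e := by
          gcongr
          · exact min_le_right _ _
          · exact_mod_cast hH₀.le.trans H₀.le_succ
      _ = 1 := inv_mul_cancel₀ (by positivity)
      _ ≤ f H := hsmall H hH

/-- Fix `n ≥ 2`. There is `c > 0` such that for every integer
`H ≥ 2`, `𝐒ₙ(H) ≥ c · H^(n² − 2n + 2)`. -/
theorem doubly_stochastic_count_lower_bound (n : ℕ) (hn : 2 ≤ n) :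
    ∃ c : ℝ, 0 < c ∧ ∀ H : ℕ, 2 ≤ H →
      c * (H : ℝ) ^ (n ^ 2 - 2 * n + 2) ≤ (doublyStochCount n H : ℝ) := by
  obtain ⟨k, rfl⟩ : ∃ k, n = k + 2 := ⟨n - 2, by omega⟩
  have hexp : (k + 2) ^ 2 - 2 * (k + 2) + 2 = (k + 1) ^ 2 + 1 := by
    rw [add_sq, add_sq]; omega
  obtain ⟨c, hc, hbound⟩ :=
    exists_pos_mul_pow_le (f := fun H => (doublyStochCount (k + 2) H : ℝ))
    (inv_pos.2 (Nat.cast_pos.2 (by positivity))) (fun H => mul_pow_le_doublyStochCount k)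
    (fun H hH => mod_cast one_le_doublyStochCount (k + 2) hH)
  exact ⟨c, hc, fun H hH => hexp ▸ hbound H (by omega)⟩
end
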